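/- arXiv:2306.14886 — 3 statements merged into one kernel-verified Lean document; each statement's English description precedes it below -/
import Mathlib

section
/- Let Σ_x ≻ O be a p×p positive definite matrix and V a symmetric p×p matrix. Suppose Σ* with O ⪯ Σ* ⪯ Σ_x attains the minimum of Tr(V S) over all symmetric S with O ⪯ S ⪯ Σ_x. Then the matrix W* = (Σ_x − Σ*)^{1/2} V (Σ_x − Σ*)^{1/2} is positive semi-definite. -/
open Matrix

section

open scoped ComplexOrder

/-- The positive semidefinite square root of a positive semidefinite matrix
(removed from Mathlib; restored here with its former definition). -/
noncomputable def Matrix.PosSemidef.sqrt {n 𝕜 : Type*} [Fintype n] [RCLike 𝕜] [DecidableEq n]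
    {A : Matrix n n 𝕜} (hA : A.PosSemidef) : Matrix n n 𝕜 :=
  hA.1.eigenvectorUnitary.1 * diagonal ((↑) ∘ (Real.sqrt ∘ hA.1.eigenvalues)) *
  (star hA.1.eigenvectorUnitary : Matrix n n 𝕜)

end

private lemma Matrix.PosSemidef.posSemidef_sqrt {p : ℕ} {A : Matrix (Fin p) (Fin p) ℝ}
    (hA : A.PosSemidef) : hA.sqrt.PosSemidef := by
  unfold Matrix.PosSemidef.sqrt
  rw [Matrix.star_eq_conjTranspose]
  refine Matrix.PosSemidef.mul_mul_conjTranspose_same ?_ _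
  rw [posSemidef_diagonal_iff]
  intro i
  simp [Real.sqrt_nonneg]

private lemma Matrix.PosSemidef.sqrt_mul_self {p : ℕ} {A : Matrix (Fin p) (Fin p) ℝ}
    (hA : A.PosSemidef) : hA.sqrt * hA.sqrt = A := by
  unfold Matrix.PosSemidef.sqrt
  conv_rhs => rw [hA.1.spectral_theorem, Unitary.conjStarAlgAut_apply]
  have hU : (star hA.1.eigenvectorUnitary : Matrix (Fin p) (Fin p) ℝ) *
      hA.1.eigenvectorUnitary.1 = 1 := Unitary.coe_star_mul_self _
  have hD : diagonal ((↑) ∘ (Real.sqrt ∘ hA.1.eigenvalues)) *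
      diagonal ((↑) ∘ (Real.sqrt ∘ hA.1.eigenvalues)) =
      diagonal (RCLike.ofReal ∘ hA.1.eigenvalues : Fin p → ℝ) := by
    rw [diagonal_mul_diagonal]
    congr 1
    funext i
    simp [Real.mul_self_sqrt (hA.eigenvalues_nonneg i)]
  calc _ = hA.1.eigenvectorUnitary.1 * (diagonal ((↑) ∘ (Real.sqrt ∘ hA.1.eigenvalues)) *
      ((star hA.1.eigenvectorUnitary : Matrix (Fin p) (Fin p) ℝ) *
      hA.1.eigenvectorUnitary.1) * diagonal ((↑) ∘ (Real.sqrt ∘ hA.1.eigenvalues))) *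
      (star hA.1.eigenvectorUnitary : Matrix (Fin p) (Fin p) ℝ) := by
        simp only [Matrix.mul_assoc]; rfl
    _ = _ := by rw [hU, Matrix.mul_one, hD]

private lemma vmv_quad {p : ℕ} (v z : Fin p → ℝ) :
    z ⬝ᵥ (vecMulVec v v *ᵥ z) = (v ⬝ᵥ z) * (v ⬝ᵥ z) := by
  simp only [dotProduct, mulVec, vecMulVec_apply, Finset.mul_sum, Finset.sum_mul]
  exact Finset.sum_congr rfl fun i _ => Finset.sum_congr rfl fun j _ => by ring

private lemma vmv_symm {p : ℕ} (c : ℝ) (v : Fin p → ℝ) :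
    (c • vecMulVec v v).IsHermitian := by
  ext i j
  simp [conjTranspose_apply, vecMulVec_apply, mul_comm]

/-- Proposition 1: if `Σ*` attains the minimum of `Tr(V S)` over `O ⪯ S ⪯ Σ_x`, then
`W* = (Σ_x − Σ*)^{1/2} V (Σ_x − Σ*)^{1/2}` is positive semi-definite. -/
theorem transformed_cost_posSemidef_at_min {p : ℕ}
    (Sx V Sstar : Matrix (Fin p) (Fin p) ℝ) (hSx : Sx.PosDef) (hV : V.IsSymm)
    (hS : Sstar.PosSemidef) (hd : (Sx - Sstar).PosSemidef)
    (hmin : ∀ S : Matrix (Fin p) (Fin p) ℝ, S.PosSemidef → (Sx - S).PosSemidef →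
      (V * Sstar).trace ≤ (V * S).trace) :
    (hd.sqrt * V * hd.sqrt).PosSemidef := by
  set Q := hd.sqrt with hQdef
  have hQps : Q.PosSemidef := hd.posSemidef_sqrt
  have hQQ : Q * Q = Sx - Sstar := hd.sqrt_mul_self
  have hQH : Qᴴ = Q := hQps.1
  have hQT : Qᵀ = Q := by rw [← conjTranspose_eq_transpose_of_trivial]; exact hQH
  have hVH : V.IsHermitian := by
    rw [Matrix.IsHermitian, conjTranspose_eq_transpose_of_trivial]; exact hV
  refine PosSemidef.of_dotProduct_mulVec_nonneg ?_ ?_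
  · have := isHermitian_conjTranspose_mul_mul Q hVH
    rwa [hQH] at this
  · intro x
    set y : Fin p → ℝ := Q *ᵥ x with hy
    have hxQ : x ᵥ* Q = y := by rw [hy, ← hQT, vecMul_transpose, hQT]
    have hform : star x ⬝ᵥ ((Q * V * Q) *ᵥ x) = y ⬝ᵥ (V *ᵥ y) := by
      rw [show (star x : Fin p → ℝ) = x from funext fun i => star_trivial _,
        ← mulVec_mulVec, ← mulVec_mulVec, dotProduct_mulVec, hxQ]
    rw [hform]
    -- perturbation argument
    set c : ℝ := (1 + x ⬝ᵥ x)⁻¹ with hcdef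
    have hx2 : 0 ≤ x ⬝ᵥ x := Finset.sum_nonneg fun i _ => mul_self_nonneg _
    have hc : 0 < c := inv_pos.2 (by linarith)
    have hc1 : c * (1 + x ⬝ᵥ x) = 1 := inv_mul_cancel₀ (by linarith)
    set S : Matrix (Fin p) (Fin p) ℝ := Sstar + c • vecMulVec y y with hSdef
    have hS1 : S.PosSemidef := by
      refine hS.add (PosSemidef.of_dotProduct_mulVec_nonneg ?_ ?_)
      · exact vmv_symm c y
      · intro z
        rw [show (star z : Fin p → ℝ) = z from funext fun i => star_trivial _,
          smul_mulVec, dotProduct_smul, smul_eq_mul, vmv_quad]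
        exact mul_nonneg hc.le (mul_self_nonneg _)
    have hY : vecMulVec y y = Q * vecMulVec x x * Q := by
      rw [vecMulVec_eq Unit, vecMulVec_eq Unit, hy, replicateCol_mulVec, replicateRow_mulVec, transpose_mul,
        transpose_replicateCol, hQT, Matrix.mul_assoc, Matrix.mul_assoc, Matrix.mul_assoc]
    have hS2 : (Sx - S).PosSemidef := by
      have hXps : ((1 : Matrix (Fin p) (Fin p) ℝ) - c • vecMulVec x x).PosSemidef := by
        refine PosSemidef.of_dotProduct_mulVec_nonneg (isHermitian_one.sub (vmv_symm c x)) fun z => ?_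
        rw [show (star z : Fin p → ℝ) = z from funext fun i => star_trivial _,
          sub_mulVec, one_mulVec, dotProduct_sub, smul_mulVec, dotProduct_smul,
          smul_eq_mul, vmv_quad]
        have hz2 : 0 ≤ z ⬝ᵥ z := Finset.sum_nonneg fun i _ => mul_self_nonneg _
        have hcs : (x ⬝ᵥ z) * (x ⬝ᵥ z) ≤ (x ⬝ᵥ x) * (z ⬝ᵥ z) := by
          have := Finset.sum_mul_sq_le_sq_mul_sq Finset.univ x z
          simp only [dotProduct, ← sq]
          convert this using 2 <;> simp [sq]
        nlinarith [mul_le_mul_of_nonneg_left hcs hc.le]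
      have key : Sx - S = Q * ((1 : Matrix (Fin p) (Fin p) ℝ) - c • vecMulVec x x) * Qᴴ := by
        rw [hQH, hSdef, hY, Matrix.mul_sub, Matrix.sub_mul, Matrix.mul_one,
          mul_smul_comm, smul_mul_assoc, hQQ]
        abel
      rw [key]
      exact hXps.mul_mul_conjTranspose_same Q
    have htr : (V * vecMulVec y y).trace = y ⬝ᵥ (V *ᵥ y) := by
      simp only [Matrix.trace, Matrix.diag, Matrix.mul_apply, vecMulVec_apply, dotProduct,
        mulVec, Finset.mul_sum]
      exact Finset.sum_congr rfl fun i _ => Finset.sum_congr rfl fun j _ => by ring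
    have hexp : (V * S).trace = (V * Sstar).trace + c * (y ⬝ᵥ (V *ᵥ y)) := by
      rw [hSdef, Matrix.mul_add, trace_add, mul_smul_comm, trace_smul, smul_eq_mul, htr]
    have hle := hmin S hS1 hS2
    rw [hexp] at hle
    nlinarith
end

section
/- Let Σ_x ≻ O, let V be symmetric, and suppose Σ* attains min of Tr(V S) over O ⪯ S ⪯ Σ_x. Then for every symmetric Σ' with Σ* ⪯ Σ' ⪯ Σ_x, the minimum of Tr(V S) over Σ' ⪯ S ⪯ Σ_x is equal to Tr(V Σ'). In particular, every Σ' above the optimum is stable. -/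
open Matrix

/-! If `m` minimises an additive `f` over `[a, b]` and `a ≤ m ≤ x ≤ y ≤ b`, the translate
`m + (y - x)` still lies in `[a, b]` and has value `f m + (f y - f x)`, whence `f x ≤ f y`.
With the Loewner order on matrices and `f S = Tr (V S)` this is the theorem. -/

section OrderedGroup

variable {α β : Type*} [AddCommGroup α] [PartialOrder α] [IsOrderedAddMonoid α]
  [AddCommGroup β] [PartialOrder β] [IsOrderedAddMonoid β]

theorem AddMonoidHom.map_le_map_of_isMinOn_Icc (f : α →+ β) {a b m x y : α}
    (hm : IsMinOn f (Set.Icc a b) m) (ham : a ≤ m) (hmx : m ≤ x) (hxy : x ≤ y)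
    (hyb : y ≤ b) : f x ≤ f y := by
  have hshift : m + (y - x) ∈ Set.Icc a b := by
    constructor
    · exact ham.trans (le_add_of_nonneg_right (sub_nonneg.mpr hxy))
    · calc m + (y - x) ≤ x + (y - x) := add_le_add_left hmx _
        _ = y := add_sub_cancel x y
        _ ≤ b := hyb
  have hval : f m ≤ f m + (f y - f x) := by
    simpa only [map_add, map_sub] using isMinOn_iff.mp hm _ hshift
  exact sub_nonneg.mp (le_add_iff_nonneg_right _ |>.mp hval)

theorem AddMonoidHom.isLeast_image_Icc_of_isMinOn (f : α →+ β) {a b m x : α}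
    (hm : IsMinOn f (Set.Icc a b) m) (ham : a ≤ m) (hmx : m ≤ x) (hxb : x ≤ b) :
    IsLeast (f '' Set.Icc x b) (f x) :=
  ⟨⟨x, ⟨le_rfl, hxb⟩, rfl⟩, by
    rintro _ ⟨y, ⟨hxy, hyb⟩, rfl⟩
    exact f.map_le_map_of_isMinOn_Icc hm ham hmx hxy hyb⟩

end OrderedGroup

open scoped MatrixOrder

theorem stable_above_optimum_general {p : ℕ}
    (Sx V Sstar : Matrix (Fin p) (Fin p) ℝ)
    (hS : Sstar.PosSemidef)
    (hmin : ∀ S : Matrix (Fin p) (Fin p) ℝ, S.PosSemidef → (Sx - S).PosSemidef →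
      (V * Sstar).trace ≤ (V * S).trace)
    (S' : Matrix (Fin p) (Fin p) ℝ) (h1 : (S' - Sstar).PosSemidef)
    (h2 : (Sx - S').PosSemidef) :
    IsLeast {x : ℝ | ∃ S : Matrix (Fin p) (Fin p) ℝ,
        (S - S').PosSemidef ∧ (Sx - S).PosSemidef ∧ x = (V * S).trace}
      ((V * S').trace) := by
  let f : Matrix (Fin p) (Fin p) ℝ →+ ℝ :=
    (traceAddMonoidHom (Fin p) ℝ).comp (AddMonoidHom.mulLeft V)
  have hf : IsMinOn f (Set.Icc 0 Sx) Sstar := fun S hS ↦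
    hmin S (nonneg_iff_posSemidef.mp hS.1) hS.2
  have hset : {x : ℝ | ∃ S : Matrix (Fin p) (Fin p) ℝ,
      (S - S').PosSemidef ∧ (Sx - S).PosSemidef ∧ x = (V * S).trace} = f '' Set.Icc S' Sx :=
    Set.ext fun _ ↦ ⟨fun ⟨S, hlo, hhi, ht⟩ ↦ ⟨S, ⟨hlo, hhi⟩, ht.symm⟩,
      fun ⟨S, ⟨hlo, hhi⟩, ht⟩ ↦ ⟨S, hlo, hhi, ht.symm⟩⟩
  exact hset ▸ f.isLeast_image_Icc_of_isMinOn hf hS.nonneg h1 h2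

/-- Lemma 5: if `Σ*` attains the minimum of `Tr(V S)` over `O ⪯ S ⪯ Σ_x`, then every
`Σ'` with `Σ* ⪯ Σ' ⪯ Σ_x` is stable: the minimum of `Tr(V S)` over `Σ' ⪯ S ⪯ Σ_x`
equals `Tr(V Σ')`. -/
theorem stable_above_optimum {p : ℕ}
    (Sx V Sstar : Matrix (Fin p) (Fin p) ℝ) (hSx : Sx.PosDef) (hV : V.IsSymm)
    (hS : Sstar.PosSemidef) (hd : (Sx - Sstar).PosSemidef)
    (hmin : ∀ S : Matrix (Fin p) (Fin p) ℝ, S.PosSemidef → (Sx - S).PosSemidef →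
      (V * Sstar).trace ≤ (V * S).trace)
    (S' : Matrix (Fin p) (Fin p) ℝ) (h1 : (S' - Sstar).PosSemidef)
    (h2 : (Sx - S').PosSemidef) :
    IsLeast {x : ℝ | ∃ S : Matrix (Fin p) (Fin p) ℝ,
        (S - S').PosSemidef ∧ (Sx - S).PosSemidef ∧ x = (V * S).trace}
      ((V * S').trace) :=
  stable_above_optimum_general Sx V Sstar hS hmin S' h1 h2
end

section
/- Let K be a real p×p matrix such that both K Kᵀ and Kᵀ K are symmetric idempotent (orthogonal projections). Let P be a symmetric idempotent p×p matrix satisfying (Kᵀ K) P = P. Then the matrix (I − K Kᵀ) + K P Kᵀ is a symmetric idempotent (orthogonal projection). -/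
/-!
Write `E = K Kᵀ` and `F = K P Kᵀ`. Since `Kᵀ K` acts as the identity on the range of `P`,
`F` is again an orthogonal projection and `E F = F`, i.e. the range of `F` lies in that of `E`.
Hence `I − E` and `F` are orthogonal projections with `(I − E) F = 0`, and the sum of two such
projections is again an orthogonal projection.
-/

open Matrix

section StarRing

variable {R : Type*} [Ring R] [StarRing R] {K P : R}

theorem mul_star_self_mul_conjugate (hKP : star K * K * P = P) :
    K * star K * (K * P * star K) = K * P * star K := by
  simp only [← mul_assoc]
  rw [mul_assoc K (star K) K, mul_assoc K (star K * K) P, hKP]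

namespace IsStarProjection

theorem conjugate_of_star_mul_self_mul_eq (hP : IsStarProjection P)
    (hKP : star K * K * P = P) : IsStarProjection (K * P * star K) where
  isSelfAdjoint := hP.isSelfAdjoint.conjugate K
  isIdempotentElem := by
    calc K * P * star K * (K * P * star K) = K * P * (star K * K * P) * star K := by
          simp only [mul_assoc]
      _ = K * P * star K := by rw [hKP, mul_assoc K P P, hP.isIdempotentElem.eq]

theorem one_sub_mul_star_self_add_conjugate (hE : IsStarProjection (K * star K))
    (hP : IsStarProjection P) (hKP : star K * K * P = P) :
    IsStarProjection (1 - K * star K + K * P * star K) :=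
  hE.one_sub.add (hP.conjugate_of_star_mul_self_mul_eq hKP) <| by
    rw [sub_mul, one_mul, mul_star_self_mul_conjugate hKP, sub_self]

end IsStarProjection

end StarRing

theorem Matrix.star_eq_transpose_of_trivial {n α : Type*} [Star α] [TrivialStar α]
    (M : Matrix n n α) : star M = Mᵀ := by
  rw [star_eq_conjTranspose, conjTranspose_eq_transpose_of_trivial]

theorem projection_composition_general {p : ℕ}
    (K P : Matrix (Fin p) (Fin p) ℝ)
    (hKKt2 : (K * Kᵀ) * (K * Kᵀ) = K * Kᵀ)
    (hPsymm : Pᵀ = P) (hPidem : P * P = P) (hKP : (Kᵀ * K) * P = P) :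
    let Q : Matrix (Fin p) (Fin p) ℝ := (1 - K * Kᵀ) + K * P * Kᵀ
    Qᵀ = Q ∧ Q * Q = Q := by
  intro Q
  simp only [← star_eq_transpose_of_trivial] at hKKt2 hPsymm hKP ⊢
  have hE : IsStarProjection (K * star K) := ⟨hKKt2, .mul_star_self K⟩
  have hQ := hE.one_sub_mul_star_self_add_conjugate ⟨hPidem, hPsymm⟩ hKP
  exact ⟨hQ.isSelfAdjoint, hQ.isIdempotentElem⟩

/-- If `K Kᵀ` and `Kᵀ K` are symmetric idempotents and `P` is a symmetric idempotent with
`(Kᵀ K) P = P`, then `(I − K Kᵀ) + K P Kᵀ` is a symmetric idempotent. -/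
theorem projection_composition {p : ℕ}
    (K P : Matrix (Fin p) (Fin p) ℝ)
    (hKKt : (K * Kᵀ)ᵀ = K * Kᵀ) (hKKt2 : (K * Kᵀ) * (K * Kᵀ) = K * Kᵀ)
    (hKtK : (Kᵀ * K)ᵀ = Kᵀ * K) (hKtK2 : (Kᵀ * K) * (Kᵀ * K) = Kᵀ * K)
    (hPsymm : Pᵀ = P) (hPidem : P * P = P) (hKP : (Kᵀ * K) * P = P) :
    let Q : Matrix (Fin p) (Fin p) ℝ := (1 - K * Kᵀ) + K * P * Kᵀ
    Qᵀ = Q ∧ Q * Q = Q :=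
  projection_composition_general K P hKKt2 hPsymm hPidem hKP
end
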